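/- arXiv:1405.3224 — 7 statements merged into one kernel-verified Lean document; each statement's English description precedes it below -/
import Mathlib

section
/- Let σ > 0 and let X₁, X₂, … be independent real-valued random variables on a probability space such that for every i and every λ ∈ ℝ, log E[exp(λ Xᵢ)] ≤ λ²σ²/2. For every positive integer t let S_t = X₁ + ⋯ + X_t. Then for every β > 1 and every x ≥ 8/(e−1)², P( ∃ t ∈ ℕ, t ≥ 1, S_t > √(2σ² t (x + β·log(log(e·t)))) ) ≤ √e · ζ(β(1 − 1/(2x))) · (√x/(2√2) + 1)^β · exp(−x), where ζ(u) = Σ_{k≥1} k^{−u}. -/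
/-
For every `l`, `exp (l S_t - t σ² l² / 2)` is a nonnegative supermartingale, so Ville's maximal
inequality bounds the probability that the partial sums `S_t` ever reach a line `a + b t` by
`exp (-2ab/σ²)`. Peel time into the epochs `[ρ^(2k), ρ^(2k+2)]`, with `ρ = (q + 1)/(q - 1)` and
`q = √(2x)`: on epoch `k` the boundary of the theorem lies above `w_k √t`,
`w_k = √(2σ² L_k)`, `L_k = x + β log (1 + 2k log ρ)`, and hence above the chord of `t ↦ w_k √t`
over the epoch. Crossing that chord has probability at most `exp (-4ρ/(ρ+1)² L_k)`, and
`4ρ/(ρ+1)² = 1 - 1/(2x)`. Finally `1 + 2k log ρ ≥ (k + 1)/C` with `C = √x/(2√2) + 1`, which turns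
the bounds into the terms of the series `√e C^β e^(-x) ∑ (k+1)^(-β(1 - 1/(2x)))`.
-/

open MeasureTheory ProbabilityTheory Real Finset
open scoped NNReal ENNReal

namespace MeasureTheory

variable {Ω : Type*} {mΩ : MeasurableSpace Ω} {μ : Measure Ω} [IsFiniteMeasure μ]
  {𝒢 : Filtration ℕ mΩ} {f : ℕ → Ω → ℝ}

theorem Supermartingale.maximal_ineq (hf : Supermartingale f 𝒢 μ) (hnonneg : 0 ≤ f) (ε : ℝ)
    (n : ℕ) : ε * μ.real {ω | ∃ t ≤ n, ε ≤ f t ω} ≤ μ[f 0] := by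
  set τ : Ω → ℕ∞ := fun ω ↦ (hittingBtwn f {y | ε ≤ y} 0 n ω : ℕ)
  have hτ : IsStoppingTime 𝒢 τ :=
    hf.stronglyAdapted.adapted.isStoppingTime_hittingBtwn measurableSet_Ici
  have hτn : ∀ ω, τ ω ≤ n := fun ω ↦ WithTop.coe_le_coe.mpr (hittingBtwn_le ω)
  have hmeas : MeasurableSet {ω | ∃ t ≤ n, ε ≤ f t ω} := by
    have : {ω | ∃ t ≤ n, ε ≤ f t ω} = ⋃ t ≤ n, {ω | ε ≤ f t ω} := by ext; simp
    rw [this]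
    exact .biUnion (Set.to_countable _) fun t _ ↦
      measurableSet_le measurable_const ((hf.stronglyMeasurable t).measurable.le (𝒢.le t))
  calc ε * μ.real {ω | ∃ t ≤ n, ε ≤ f t ω}
      ≤ ∫ ω in {ω | ∃ t ≤ n, ε ≤ f t ω}, stoppedValue f τ ω ∂μ := by
        refine setIntegral_ge_of_const_le_real hmeas (measure_ne_top _ _) ?_
          (integrable_stoppedValue ℕ hτ hf.integrable hτn).integrableOn
        rintro ω ⟨t, htn, ht⟩
        exact stoppedValue_hittingBtwn_mem ⟨t, ⟨Nat.zero_le t, htn⟩, ht⟩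
    _ ≤ μ[stoppedValue f τ] :=
        setIntegral_le_integral (integrable_stoppedValue ℕ hτ hf.integrable hτn)
          (.of_forall fun ω ↦ hnonneg _ _)
    _ ≤ μ[f 0] := by
        simpa [stoppedValue, integral_neg] using hf.neg.expected_stoppedValue_mono
          (isStoppingTime_const 𝒢 0) hτ (fun _ ↦ zero_le) hτn

theorem Supermartingale.ville_ineq (hf : Supermartingale f 𝒢 μ) (hnonneg : 0 ≤ f) {ε : ℝ}
    (hε : 0 < ε) : μ {ω | ∃ t, ε ≤ f t ω} ≤ ENNReal.ofReal (μ[f 0] / ε) := by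
  have hunion : {ω | ∃ t, ε ≤ f t ω} = ⋃ n, {ω | ∃ t ≤ n, ε ≤ f t ω} := by
    ext ω; simp only [Set.mem_ofPred_eq, Set.mem_iUnion]
    exact ⟨fun ⟨t, ht⟩ ↦ ⟨t, t, le_rfl, ht⟩, fun ⟨_, t, _, ht⟩ ↦ ⟨t, ht⟩⟩
  have hmono : Monotone fun n ↦ {ω | ∃ t ≤ n, ε ≤ f t ω} :=
    fun m n hmn ω ⟨t, htm, ht⟩ ↦ ⟨t, htm.trans hmn, ht⟩
  rw [hunion, hmono.measure_iUnion]
  refine iSup_le fun n ↦ ?_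
  rw [← ofReal_measureReal]
  exact ENNReal.ofReal_le_ofReal ((le_div_iff₀' hε).2 (hf.maximal_ineq hnonneg ε n))

end MeasureTheory

namespace ProbabilityTheory

variable {Ω : Type*} {mΩ : MeasurableSpace Ω} {μ : Measure Ω} {X : ℕ → Ω → ℝ} {c : ℝ≥0}

lemma HasSubgaussianMGF.integral_exp_mul_sub_le_one {Y : Ω → ℝ} (h : HasSubgaussianMGF Y c μ)
    (l : ℝ) : μ[fun ω ↦ exp (l * Y ω - c * l ^ 2 / 2)] ≤ 1 :=
  calc μ[fun ω ↦ exp (l * Y ω - c * l ^ 2 / 2)] = mgf Y μ l * exp (-(c * l ^ 2 / 2)) := by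
        simp only [mgf, sub_eq_add_neg, exp_add, integral_mul_const]
    _ ≤ exp (c * l ^ 2 / 2) * exp (-(c * l ^ 2 / 2)) := by gcongr; exact h.mgf_le l
    _ = 1 := by rw [← exp_add, add_neg_cancel, exp_zero]

variable [IsProbabilityMeasure μ]

/- The process is indexed by `n + 1` so that it is adapted to the natural filtration of `X`,
`σ(X 0, …, X n)`. -/
theorem iIndepFun.supermartingale_exp_mul_sum (hmeas : ∀ i, Measurable (X i))
    (hindep : iIndepFun X μ) (hX : ∀ i, HasSubgaussianMGF (X i) c μ) (l : ℝ) :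
    Supermartingale (fun n ω ↦ exp (l * ∑ i ∈ range (n + 1), X i ω - (n + 1) * (c * l ^ 2 / 2)))
      (Filtration.natural X fun i ↦ (hmeas i).stronglyMeasurable) μ := by
  set 𝒢 := Filtration.natural X fun i ↦ (hmeas i).stronglyMeasurable
  set f : ℕ → Ω → ℝ := fun n ω ↦ exp (l * ∑ i ∈ range (n + 1), X i ω - (n + 1) * (c * l ^ 2 / 2))
  set g : ℕ → Ω → ℝ := fun n ω ↦ exp (l * X n ω - c * l ^ 2 / 2)
  have hXmeas {i n : ℕ} (hi : i ≤ n) : Measurable[𝒢 n] (X i) :=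
    ((Filtration.stronglyAdapted_natural _ i).mono (𝒢.mono hi)).measurable
  have hadapted : StronglyAdapted 𝒢 f := fun n ↦
    (((Finset.measurable_sum _ fun i hi ↦ hXmeas (Nat.lt_succ_iff.1 (mem_range.1 hi))).const_mul
      l).sub_const _).exp.stronglyMeasurable
  have hint (n : ℕ) : Integrable (f n) μ := by
    simpa [f, sub_eq_add_neg, exp_add] using
      (hindep.integrable_exp_mul_sum hmeas fun i _ ↦ (hX i).integrable_exp_mul l).mul_const
        (exp (-((n + 1) * (c * l ^ 2 / 2))))
  have hgint (n : ℕ) : Integrable (g n) μ := by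
    simpa [g, sub_eq_add_neg, exp_add] using
      ((hX n).integrable_exp_mul l).mul_const (exp (-(c * l ^ 2 / 2)))
  have hfg (n : ℕ) : f (n + 1) = f n * g (n + 1) := by
    ext ω
    simp only [f, g, Pi.mul_apply, ← exp_add, sum_range_succ _ (n + 1)]
    push_cast
    ring_nf
  have hindep_g (n : ℕ) : Indep (MeasurableSpace.comap (X (n + 1)) inferInstance) (𝒢 n) μ := by
    have := indep_iSup_of_disjoint (fun i ↦ (hmeas i).comap_le) hindep
      (S := {n + 1}) (T := {j | j ≤ n}) (by simp)
    simp only [_root_.iSup_singleton, Set.mem_ofPred_eq] at this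
    exact this
  refine supermartingale_nat hadapted hint fun n ↦ ?_
  have hg_meas : StronglyMeasurable[MeasurableSpace.comap (X (n + 1)) inferInstance] (g (n + 1)) :=
    (((comap_measurable (X (n + 1))).const_mul l).sub_const _).exp.stronglyMeasurable
  calc μ[f (n + 1) | 𝒢 n] =ᵐ[μ] f n * μ[g (n + 1) | 𝒢 n] := by
        rw [hfg]
        exact condExp_mul_of_stronglyMeasurable_left (hadapted n) (hfg n ▸ hint _) (hgint _)
    _ =ᵐ[μ] f n * fun _ ↦ μ[g (n + 1)] := by
        filter_upwards [condExp_indep_eq (hmeas _).comap_le (𝒢.le n) hg_meas (hindep_g n)] with ω hω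
        simp [hω]
    _ ≤ᵐ[μ] f n := .of_forall fun ω ↦
        mul_le_of_le_one_right (exp_nonneg _) ((hX _).integral_exp_mul_sub_le_one l)

theorem measure_exists_sum_range_ge_linear_le (hmeas : ∀ i, Measurable (X i))
    (hindep : iIndepFun X μ) (hX : ∀ i, HasSubgaussianMGF (X i) c μ) (hc : 0 < c) {a b : ℝ}
    (hb : 0 ≤ b) :
    μ {ω | ∃ t : ℕ, 1 ≤ t ∧ a + b * t ≤ ∑ i ∈ range t, X i ω} ≤
      ENNReal.ofReal (exp (-(2 * a * b / c))) := by
  set l := 2 * b / c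
  have hsuper := hindep.supermartingale_exp_mul_sum hmeas hX l
  have hdrift : c * l ^ 2 / 2 = l * b := by simp only [l]; field_simp
  have hlevel : 2 * a * b / c = l * a := by simp only [l]; ring
  calc μ {ω | ∃ t : ℕ, 1 ≤ t ∧ a + b * t ≤ ∑ i ∈ range t, X i ω}
      ≤ μ {ω | ∃ n, exp (2 * a * b / c) ≤
          exp (l * ∑ i ∈ range (n + 1), X i ω - (n + 1) * (c * l ^ 2 / 2))} := by
        refine measure_mono fun ω ⟨t, ht, hS⟩ ↦ ⟨t - 1, ?_⟩
        obtain ⟨n, rfl⟩ := Nat.exists_eq_add_of_le' ht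
        rw [exp_le_exp, hdrift, hlevel]
        simp only [add_tsub_cancel_right]
        push_cast at hS ⊢
        linarith [mul_le_mul_of_nonneg_left hS (by positivity : (0 : ℝ) ≤ l)]
    _ ≤ ENNReal.ofReal (μ[fun ω ↦ exp (l * X 0 ω - c * l ^ 2 / 2)] / exp (2 * a * b / c)) := by
        simpa using hsuper.ville_ineq (fun n ω ↦ exp_nonneg _) (exp_pos _)
    _ ≤ ENNReal.ofReal (exp (-(2 * a * b / c))) := by
        rw [exp_neg, ← one_div]
        gcongr
        exact (hX 0).integral_exp_mul_sub_le_one l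

end ProbabilityTheory

lemma chord_le_mul_sqrt {ρ m w t : ℝ} (hρ : 0 < ρ) (hm : 0 < m) (hw : 0 ≤ w)
    (h₁ : m ^ 2 ≤ t) (h₂ : t ≤ (ρ * m) ^ 2) :
    ρ * m * w / (ρ + 1) + w / (m * (ρ + 1)) * t ≤ w * √t := by
  have ht : √t ^ 2 = t := sq_sqrt ((sq_nonneg m).trans h₁)
  have hlo : m ≤ √t := by simpa [sqrt_sq hm.le] using sqrt_le_sqrt h₁
  have hhi : √t ≤ ρ * m := by simpa [sqrt_sq (mul_pos hρ hm).le] using sqrt_le_sqrt h₂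
  have key : ρ * m ^ 2 + t ≤ (ρ + 1) * m * √t := by
    nlinarith [mul_nonneg (sub_nonneg.2 hlo) (sub_nonneg.2 hhi)]
  calc ρ * m * w / (ρ + 1) + w / (m * (ρ + 1)) * t = w * (ρ * m ^ 2 + t) / (m * (ρ + 1)) := by
        field_simp
    _ ≤ w * ((ρ + 1) * m * √t) / (m * (ρ + 1)) := by gcongr
    _ = w * √t := by field_simp

lemma log_one_add_mul_log_le {ρ t : ℝ} {k : ℕ} (hρ : 1 < ρ) (ht : (ρ ^ k) ^ 2 ≤ t) :
    log (1 + 2 * k * log ρ) ≤ log (log (exp 1 * t)) := by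
  have ht0 : 0 < t := lt_of_lt_of_le (by positivity) ht
  refine log_le_log (by have := log_pos hρ; positivity) ?_
  rw [log_mul (exp_pos 1).ne' ht0.ne', log_exp]
  have := log_le_log (by positivity) ht
  rw [← pow_mul, log_pow] at this
  push_cast at this
  linarith

lemma exp_neg_mul_level_le {x β ρ C : ℝ} (hx : 1 / 2 ≤ x) (hβ : 0 ≤ β) (hC : 1 ≤ C)
    (hCρ : 1 ≤ 2 * C * log ρ) (k : ℕ) :
    exp (-((1 - 1 / (2 * x)) * (x + β * log (1 + 2 * k * log ρ)))) ≤
      √(exp 1) * ((k : ℝ) + 1) ^ (-(β * (1 - 1 / (2 * x)))) * (C ^ β * exp (-x)) := by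
  set γ := 1 - 1 / (2 * x)
  have hγ0 : 0 ≤ γ := sub_nonneg.2 ((div_le_one (by linarith)).2 (by linarith))
  have hγx : γ * x = x - 1 / 2 := by simp only [γ]; field_simp
  have hlogρ : 0 < log ρ := by nlinarith
  set v := 1 + 2 * k * log ρ
  have hv : ((k : ℝ) + 1) / C ≤ v := by
    rw [div_le_iff₀ (by linarith)]
    nlinarith [(Nat.cast_nonneg k : (0 : ℝ) ≤ k)]
  have hvpow : v ^ (-(β * γ)) ≤ ((k : ℝ) + 1) ^ (-(β * γ)) * C ^ β :=
    calc v ^ (-(β * γ)) ≤ (((k : ℝ) + 1) / C) ^ (-(β * γ)) :=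
          rpow_le_rpow_of_nonpos (by positivity) hv (by simp; positivity)
      _ = ((k : ℝ) + 1) ^ (-(β * γ)) * C ^ (β * γ) := by
          rw [div_rpow (by positivity) (by linarith), div_eq_mul_inv, ← rpow_neg (by linarith),
            neg_neg]
      _ ≤ ((k : ℝ) + 1) ^ (-(β * γ)) * C ^ β := by
          gcongr
          nlinarith
  calc exp (-(γ * (x + β * log v))) = exp (1 / 2) * exp (-x) * v ^ (-(β * γ)) := by
        rw [rpow_def_of_pos (by positivity), ← exp_add, ← exp_add]
        congr 1
        linear_combination -hγx
    _ ≤ exp (1 / 2) * exp (-x) * (((k : ℝ) + 1) ^ (-(β * γ)) * C ^ β) := by gcongr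
    _ = √(exp 1) * ((k : ℝ) + 1) ^ (-(β * γ)) * (C ^ β * exp (-x)) := by
        rw [sqrt_eq_rpow, ← exp_mul]; ring_nf

lemma exists_peeling_ratio {x : ℝ} (hx : 1 / 2 < x) :
    ∃ ρ : ℝ, 1 < ρ ∧ 1 - 1 / (2 * x) = 4 * ρ / (ρ + 1) ^ 2 ∧
      1 ≤ 2 * (√x / (2 * √2) + 1) * log ρ := by
  set q := √(2 * x)
  have hq2 : q ^ 2 = 2 * x := sq_sqrt (by linarith)
  have hq1 : 1 < q := by nlinarith [sqrt_nonneg (2 * x)]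
  have hρ : 1 < (q + 1) / (q - 1) := by rw [lt_div_iff₀ (by linarith)]; linarith
  have hq1' : q - 1 ≠ 0 := by linarith
  refine ⟨(q + 1) / (q - 1), hρ, ?_, ?_⟩
  · have : (q + 1) / (q - 1) + 1 = 2 * q / (q - 1) := by field_simp; ring
    rw [this, ← hq2]
    field_simp
    ring
  · have hlog : 2 / (q + 1) ≤ log ((q + 1) / (q - 1)) := by
      have := one_sub_inv_le_log_of_pos (by linarith : 0 < (q + 1) / (q - 1))
      rw [inv_div] at this
      linarith [show 1 - (q - 1) / (q + 1) = 2 / (q + 1) by field_simp; ring]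
    have hC : √x / (2 * √2) + 1 = (q + 4) / 4 := by
      rw [show q = √2 * √x from sqrt_mul (by norm_num) x]
      field_simp
      linear_combination (-2 * √x) * sq_sqrt (show (0 : ℝ) ≤ 2 by norm_num)
    calc (1 : ℝ) ≤ 2 * ((q + 4) / 4) * (2 / (q + 1)) := by
          rw [← sub_nonneg]; field_simp; nlinarith
      _ ≤ 2 * (√x / (2 * √2) + 1) * log ((q + 1) / (q - 1)) := by
          rw [hC]; gcongr

namespace ProbabilityTheory

variable {Ω : Type*} {mΩ : MeasurableSpace Ω}

def crossingInEpoch (X : ℕ → Ω → ℝ) (σ x β ρ : ℝ) (k : ℕ) : Set Ω :=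
  {ω | ∃ t : ℕ, (ρ ^ k) ^ 2 ≤ t ∧ t ≤ (ρ ^ (k + 1)) ^ 2 ∧
    ∑ i ∈ range t, X i ω > √(2 * σ ^ 2 * t * (x + β * log (log (exp 1 * t))))}

lemma subset_iUnion_crossingInEpoch {X : ℕ → Ω → ℝ} {σ x β ρ : ℝ} (hρ : 1 < ρ) :
    {ω | ∃ t : ℕ, 1 ≤ t ∧
      ∑ i ∈ range t, X i ω > √(2 * σ ^ 2 * t * (x + β * log (log (exp 1 * t))))} ⊆
      ⋃ k, crossingInEpoch X σ x β ρ k := by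
  rintro ω ⟨t, ht, hS⟩
  obtain ⟨k, hk₁, hk₂⟩ := exists_nat_pow_near (show (1 : ℝ) ≤ t by exact_mod_cast ht)
    (one_lt_pow₀ hρ two_ne_zero)
  simp only [← pow_mul, mul_comm 2] at hk₁ hk₂
  exact Set.mem_iUnion.2 ⟨k, t, by rwa [← pow_mul], by rw [← pow_mul]; exact hk₂.le, hS⟩

variable {μ : Measure Ω} [IsProbabilityMeasure μ] {X : ℕ → Ω → ℝ}

theorem measure_crossingInEpoch_le (hmeas : ∀ i, Measurable (X i)) (hindep : iIndepFun X μ)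
    {σ : ℝ} (hσ : 0 < σ) (hX : ∀ i, HasSubgaussianMGF (X i) ⟨σ ^ 2, sq_nonneg σ⟩ μ)
    {x β ρ : ℝ} (hx : 0 ≤ x) (hβ : 0 ≤ β) (hρ : 1 < ρ) (k : ℕ) :
    μ (crossingInEpoch X σ x β ρ k) ≤
      ENNReal.ofReal (exp (-(4 * ρ / (ρ + 1) ^ 2 * (x + β * log (1 + 2 * k * log ρ))))) := by
  set L := x + β * log (1 + 2 * k * log ρ)
  have hL : 0 ≤ L := add_nonneg hx (mul_nonneg hβ (log_nonneg
    (le_add_of_nonneg_right (mul_nonneg (by positivity) (log_nonneg hρ.le)))))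
  set w := √(2 * σ ^ 2 * L)
  have hw : w ^ 2 = 2 * σ ^ 2 * L := sq_sqrt (by positivity)
  set m := ρ ^ k
  have hm : 1 ≤ m := one_le_pow₀ hρ.le
  have hρ0 : 0 < ρ := by linarith
  calc μ (crossingInEpoch X σ x β ρ k)
      ≤ μ {ω | ∃ t : ℕ, 1 ≤ t ∧
          ρ * m * w / (ρ + 1) + w / (m * (ρ + 1)) * t ≤ ∑ i ∈ range t, X i ω} := by
        refine measure_mono fun ω ⟨t, ht₁, ht₂, hS⟩ ↦ ⟨t, ?_, ?_⟩
        · exact_mod_cast (one_le_pow₀ hm).trans ht₁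
        · have hLt : L ≤ x + β * log (log (exp 1 * t)) :=
            add_le_add_right (mul_le_mul_of_nonneg_left (log_one_add_mul_log_le hρ ht₁) hβ) x
          refine (chord_le_mul_sqrt hρ0 (by linarith) (sqrt_nonneg _) ht₁
            (by rwa [← pow_succ'])).trans (le_of_lt (lt_of_le_of_lt ?_ hS))
          rw [← sqrt_mul (by positivity)]
          refine sqrt_le_sqrt ?_
          calc 2 * σ ^ 2 * L * t = 2 * σ ^ 2 * t * L := by ring
            _ ≤ _ := by gcongr
    _ ≤ ENNReal.ofReal (exp (-(2 * (ρ * m * w / (ρ + 1)) * (w / (m * (ρ + 1))) / σ ^ 2))) :=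
        measure_exists_sum_range_ge_linear_le hmeas hindep hX (NNReal.coe_pos.1 (pow_pos hσ 2))
          (by positivity)
    _ = _ := by
        congr 4
        field_simp
        rw [hw]
        ring

end ProbabilityTheory

theorem stmt_0 {Ω : Type*} [MeasurableSpace Ω] (P : Measure Ω) [IsProbabilityMeasure P]
    (σ : ℝ) (hσ : 0 < σ) (X : ℕ → Ω → ℝ) (hmeas : ∀ i, Measurable (X i))
    (hindep : iIndepFun X P)
    (hsubg : ∀ (i : ℕ) (l : ℝ), Integrable (fun ω => Real.exp (l * X i ω)) P ∧
      Real.log (∫ ω, Real.exp (l * X i ω) ∂P) ≤ l ^ 2 * σ ^ 2 / 2)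
    (β x : ℝ) (hβ : 1 < β) (hx : 8 / (Real.exp 1 - 1) ^ 2 ≤ x) :
    P {ω | ∃ t : ℕ, 1 ≤ t ∧
        (∑ i ∈ Finset.range t, X i ω) >
          Real.sqrt (2 * σ ^ 2 * t * (x + β * Real.log (Real.log (Real.exp 1 * t))))} ≤
      ENNReal.ofReal (Real.sqrt (Real.exp 1)) *
        (∑' k : ℕ, ENNReal.ofReal (((k : ℝ) + 1) ^ (-(β * (1 - 1 / (2 * x)))))) *
        ENNReal.ofReal ((Real.sqrt x / (2 * Real.sqrt 2) + 1) ^ β * Real.exp (-x)) := by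
  have hx : 1 / 2 < x := by
    refine lt_of_lt_of_le ?_ hx
    rw [lt_div_iff₀ (pow_pos (by linarith [exp_one_gt_d9]) 2)]
    nlinarith [exp_one_lt_d9, exp_one_gt_d9]
  obtain ⟨ρ, hρ, hγ, hCρ⟩ := exists_peeling_ratio hx
  have hX (i : ℕ) : HasSubgaussianMGF (X i) ⟨σ ^ 2, sq_nonneg σ⟩ P :=
    ⟨fun l ↦ (hsubg i l).1, fun l ↦ by
      rw [mgf, ← exp_log (integral_exp_pos (hsubg i l).1)]
      show _ ≤ exp (σ ^ 2 * l ^ 2 / 2)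
      exact exp_le_exp.2 ((hsubg i l).2.trans_eq (by ring))⟩
  calc P _ ≤ P (⋃ k, crossingInEpoch X σ x β ρ k) :=
        measure_mono (subset_iUnion_crossingInEpoch hρ)
    _ ≤ ∑' k, P (crossingInEpoch X σ x β ρ k) := measure_iUnion_le _
    _ ≤ ∑' k : ℕ, ENNReal.ofReal √(exp 1) *
          ENNReal.ofReal (((k : ℝ) + 1) ^ (-(β * (1 - 1 / (2 * x))))) *
          ENNReal.ofReal ((√x / (2 * √2) + 1) ^ β * exp (-x)) := by
        gcongr with k
        rw [← ENNReal.ofReal_mul (sqrt_nonneg _), ← ENNReal.ofReal_mul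
          (mul_nonneg (sqrt_nonneg _) (rpow_nonneg (Nat.cast_add_one_pos k).le _))]
        refine (measure_crossingInEpoch_le hmeas hindep hσ hX (by linarith) (by linarith) hρ
          k).trans (ENNReal.ofReal_le_ofReal ?_)
        rw [← hγ]
        exact exp_neg_mul_level_le hx.le (by linarith) (le_add_of_nonneg_left (by positivity)) hCρ k
    _ = _ := by rw [ENNReal.tsum_mul_right, ENNReal.tsum_mul_left]
end

section
/- Let σ > 0 and let X₁, X₂, … be independent real-valued random variables on a probability space such that for every i and every λ ∈ ℝ, log E[exp(λ Xᵢ)] ≤ λ²σ²/2. For every positive integer t let S_t = X₁ + ⋯ + X_t. Then for every λ ∈ ℝ and every u > 0, P( ∃ t ∈ ℕ, t ≥ 1, λ S_t − t λ²σ²/2 > u ) ≤ exp(−u). -/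
/-!
Normalising each factor `exp (λ Xᵢ)` by its mean `mᵢ ≤ exp (λ²σ²/2)` makes
`M_t = ∏_{i<t} exp (λ Xᵢ) / mᵢ` a product of independent mean-one variables, hence a nonnegative
martingale, and `M_t` dominates `exp (λ S_t - t λ²σ²/2)`. Doob's maximal inequality on finite
horizons, passed to the limit (Ville's inequality), bounds the probability that `M` ever reaches
`exp u` by `exp (-u)`.
-/

open MeasureTheory ProbabilityTheory

section IndependentProducts

open Finset

variable {Ω : Type*} {Y : ℕ → Ω → ℝ}

abbrev sigmaBefore (Y : ℕ → Ω → ℝ) (n : ℕ) : MeasurableSpace Ω :=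
  ⨆ i ∈ Set.Iio n, MeasurableSpace.comap (Y i) inferInstance

lemma sigmaBefore_mono : Monotone (sigmaBefore Y) :=
  fun _ _ hmn => biSup_mono fun _ hi => lt_of_lt_of_le hi hmn

lemma measurable_prod_range_sigmaBefore {n : ℕ} :
    Measurable[sigmaBefore Y n] fun ω => ∏ i ∈ range n, Y i ω :=
  Finset.measurable_prod _ fun i hi =>
    Measurable.of_comap_le (le_iSup₂ (f := fun i (_ : i ∈ Set.Iio n) =>
      MeasurableSpace.comap (Y i) inferInstance) i (Finset.mem_range.1 hi))

variable [MeasurableSpace Ω] {μ : Measure Ω}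

lemma indepFun_of_measurable_sigmaBefore (hY : iIndepFun Y μ) (hmeas : ∀ i, Measurable (Y i))
    {n : ℕ} {g : Ω → ℝ} (hg : Measurable[sigmaBefore Y n] g) : IndepFun g (Y n) μ := by
  have h := indep_iSup_of_disjoint (fun i => (hmeas i).comap_le) hY.iIndep
    (S := Set.Iio n) (T := {n}) (by simp)
  rw [_root_.iSup_singleton] at h
  exact (IndepFun_iff_Indep _ _ _).2 (indep_of_indep_of_le_left h hg.comap_le)

lemma stronglyMeasurable_prod_range (hmeas : ∀ i, Measurable (Y i)) (n : ℕ) :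
    StronglyMeasurable fun ω => ∏ i ∈ range n, Y i ω :=
  (Finset.measurable_prod _ fun i _ => hmeas i).stronglyMeasurable

lemma integrable_prod_range [IsFiniteMeasure μ] (hY : iIndepFun Y μ)
    (hmeas : ∀ i, Measurable (Y i)) (hint : ∀ i, Integrable (Y i) μ) (n : ℕ) :
    Integrable (fun ω => ∏ i ∈ range n, Y i ω) μ := by
  induction n with
  | zero => simp
  | succ n ih =>
    simp_rw [prod_range_succ]
    exact (indepFun_of_measurable_sigmaBefore hY hmeas
      measurable_prod_range_sigmaBefore).integrable_mul ih (hint n)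

lemma natural_prod_range_le_sigmaBefore (hmeas : ∀ i, Measurable (Y i)) (n : ℕ) :
    Filtration.natural _ (stronglyMeasurable_prod_range hmeas) n ≤ sigmaBefore Y n :=
  iSup₂_le fun _ hj =>
    (measurable_prod_range_sigmaBefore.mono (sigmaBefore_mono hj) le_rfl).comap_le

theorem martingale_prod_range [IsFiniteMeasure μ] (hY : iIndepFun Y μ)
    (hmeas : ∀ i, Measurable (Y i)) (hint : ∀ i, Integrable (Y i) μ)
    (hmean : ∀ i, ∫ ω, Y i ω ∂μ = 1) :
    Martingale (fun n ω => ∏ i ∈ range n, Y i ω)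
      (Filtration.natural _ (stronglyMeasurable_prod_range hmeas)) μ := by
  refine martingale_of_setIntegral_eq_succ (Filtration.stronglyAdapted_natural _)
    (integrable_prod_range hY hmeas hint) fun n s hs => ?_
  have hs' : MeasurableSet[sigmaBefore Y n] s := natural_prod_range_le_sigmaBefore hmeas n s hs
  have hind : IndepFun (s.indicator fun ω => ∏ i ∈ range n, Y i ω) (Y n) μ :=
    indepFun_of_measurable_sigmaBefore hY hmeas
      (measurable_prod_range_sigmaBefore.indicator hs')
  have hsm : MeasurableSet s := Filtration.le _ n s hs
  calc ∫ ω in s, ∏ i ∈ range n, Y i ω ∂μ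
      = (∫ ω, s.indicator (fun ω => ∏ i ∈ range n, Y i ω) ω ∂μ) * ∫ ω, Y n ω ∂μ := by
        rw [hmean, mul_one, integral_indicator hsm]
    _ = ∫ ω, (s.indicator (fun ω => ∏ i ∈ range n, Y i ω) * Y n) ω ∂μ :=
        (hind.integral_mul_eq_mul_integral
          ((integrable_prod_range hY hmeas hint n).indicator hsm).1 (hint n).1).symm
    _ = ∫ ω in s, ∏ i ∈ range (n + 1), Y i ω ∂μ := by
        rw [← integral_indicator hsm]
        congr 1; ext ω
        by_cases hω : ω ∈ s <;> simp [hω, prod_range_succ]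

end IndependentProducts

section Ville

variable {Ω : Type*} {m0 : MeasurableSpace Ω} {μ : Measure Ω} [IsFiniteMeasure μ]
  {𝒢 : Filtration ℕ m0} {f : ℕ → Ω → ℝ}

theorem Martingale.measure_exists_le_le (hf : Martingale f 𝒢 μ) (hnonneg : 0 ≤ f) {ε : ℝ}
    (hε : 0 < ε) : μ {ω | ∃ n, ε ≤ f n ω} ≤ ENNReal.ofReal ((∫ ω, f 0 ω ∂μ) / ε) := by
  set A : ℕ → Set Ω := fun N => {ω | ∃ k ≤ N, ε ≤ f k ω}
  have hcover : {ω | ∃ n, ε ≤ f n ω} ⊆ ⋃ N, A N := fun ω ⟨n, hn⟩ =>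
    Set.mem_iUnion.2 ⟨n, n, le_rfl, hn⟩
  have hmono : Monotone A := fun M N hMN ω ⟨k, hk, hfk⟩ => ⟨k, hk.trans hMN, hfk⟩
  refine (measure_mono hcover).trans ?_
  rw [hmono.measure_iUnion, ENNReal.ofReal_div_of_pos hε]
  refine iSup_le fun N => (ENNReal.le_div_iff_mul_le (by simp [hε]) (by simp)).2 ?_
  calc μ (A N) * ENNReal.ofReal ε
      = ε.toNNReal * μ (A N) := mul_comm _ _
    _ ≤ ENNReal.ofReal (∫ ω in A N, f N ω ∂μ) := by
        simpa [A, Real.coe_toNNReal _ hε.le] using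
          maximal_ineq hf.submartingale hnonneg (ε := ε.toNNReal) N
    _ ≤ ENNReal.ofReal (∫ ω, f N ω ∂μ) :=
        ENNReal.ofReal_le_ofReal
          (setIntegral_le_integral (hf.integrable N) (ae_of_all _ (hnonneg N)))
    _ = ENNReal.ofReal (∫ ω, f 0 ω ∂μ) := by
        rw [← setIntegral_univ, ← hf.setIntegral_eq (Nat.zero_le N) MeasurableSet.univ,
          setIntegral_univ]

end Ville

lemma Real.exp_sum_sub_card_mul_le_prod_div {ι : Type*} (s : Finset ι) (x m : ι → ℝ) {c : ℝ}
    (hm_pos : ∀ i, 0 < m i) (hm_le : ∀ i, m i ≤ Real.exp c) :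
    Real.exp (∑ i ∈ s, x i - s.card * c) ≤ ∏ i ∈ s, Real.exp (x i) / m i :=
  calc Real.exp (∑ i ∈ s, x i - s.card * c) = ∏ i ∈ s, Real.exp (x i - c) := by
        rw [← Real.exp_sum, Finset.sum_sub_distrib, Finset.sum_const, nsmul_eq_mul]
    _ ≤ ∏ i ∈ s, Real.exp (x i) / m i :=
        Finset.prod_le_prod (fun _ _ => (Real.exp_pos _).le) fun i _ => by
          rw [Real.exp_sub]
          exact div_le_div_of_nonneg_left (Real.exp_pos _).le (hm_pos i) (hm_le i)

theorem stmt_1_general {Ω : Type*} [MeasurableSpace Ω] (P : Measure Ω) [IsProbabilityMeasure P]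
    (σ : ℝ) (X : ℕ → Ω → ℝ) (hmeas : ∀ i, Measurable (X i))
    (hindep : iIndepFun X P)
    (hsubg : ∀ (i : ℕ) (l : ℝ), Integrable (fun ω => Real.exp (l * X i ω)) P ∧
      Real.log (∫ ω, Real.exp (l * X i ω) ∂P) ≤ l ^ 2 * σ ^ 2 / 2)
    (l u : ℝ) :
    P {ω | ∃ t : ℕ, 1 ≤ t ∧
        l * (∑ i ∈ Finset.range t, X i ω) - t * l ^ 2 * σ ^ 2 / 2 > u} ≤
      ENNReal.ofReal (Real.exp (-u)) := by
  set m : ℕ → ℝ := fun i => ∫ ω, Real.exp (l * X i ω) ∂P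
  have hm_pos : ∀ i, 0 < m i := fun i => integral_exp_pos (hsubg i l).1
  have hm_le : ∀ i, m i ≤ Real.exp (l ^ 2 * σ ^ 2 / 2) := fun i =>
    (Real.log_le_iff_le_exp (hm_pos i)).1 (hsubg i l).2
  set Y : ℕ → Ω → ℝ := fun i ω => Real.exp (l * X i ω) / m i
  have hY := martingale_prod_range (Y := Y)
    (hindep.comp (fun i x => Real.exp (l * x) / m i) fun i => by fun_prop)
    (fun i => by fun_prop) (fun i => (hsubg i l).1.div_const _)
    (fun i => (integral_div _ _).trans (div_self (hm_pos i).ne'))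
  have hY_nonneg : 0 ≤ fun n ω => ∏ i ∈ Finset.range n, Y i ω := fun n ω =>
    Finset.prod_nonneg fun i _ => (div_pos (Real.exp_pos _) (hm_pos i)).le
  have hdom : ∀ ω (t : ℕ), u < l * (∑ i ∈ Finset.range t, X i ω) - t * l ^ 2 * σ ^ 2 / 2 →
      Real.exp u ≤ ∏ i ∈ Finset.range t, Y i ω := fun ω t ht =>
    calc Real.exp u
        ≤ Real.exp (∑ i ∈ Finset.range t, l * X i ω
            - (Finset.range t).card * (l ^ 2 * σ ^ 2 / 2)) := by
          rw [← Finset.mul_sum, Finset.card_range]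
          exact Real.exp_le_exp.2 (by linarith)
      _ ≤ ∏ i ∈ Finset.range t, Y i ω :=
          Real.exp_sum_sub_card_mul_le_prod_div _ _ _ hm_pos hm_le
  calc _ ≤ P {ω | ∃ n, Real.exp u ≤ ∏ i ∈ Finset.range n, Y i ω} :=
        measure_mono (by rintro ω ⟨t, -, ht⟩; exact ⟨t, hdom ω t ht⟩)
    _ ≤ ENNReal.ofReal ((∫ ω, ∏ i ∈ Finset.range 0, Y i ω ∂P) / Real.exp u) :=
        Martingale.measure_exists_le_le hY hY_nonneg (Real.exp_pos u)
    _ = ENNReal.ofReal (Real.exp (-u)) := by simp [Real.exp_neg]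

theorem stmt_1 {Ω : Type*} [MeasurableSpace Ω] (P : Measure Ω) [IsProbabilityMeasure P]
    (σ : ℝ) (hσ : 0 < σ) (X : ℕ → Ω → ℝ) (hmeas : ∀ i, Measurable (X i))
    (hindep : iIndepFun X P)
    (hsubg : ∀ (i : ℕ) (l : ℝ), Integrable (fun ω => Real.exp (l * X i ω)) P ∧
      Real.log (∫ ω, Real.exp (l * X i ω) ∂P) ≤ l ^ 2 * σ ^ 2 / 2)
    (l u : ℝ) (hu : 0 < u) :
    P {ω | ∃ t : ℕ, 1 ≤ t ∧
        l * (∑ i ∈ Finset.range t, X i ω) - t * l ^ 2 * σ ^ 2 / 2 > u} ≤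
      ENNReal.ofReal (Real.exp (-u)) :=
  stmt_1_general P σ X hmeas hindep hsubg l u
end

section
/- Let σ > 0, z > 0, η > 0, k a positive integer, and t an integer such that (1+η)^{k−1} ≤ t ≤ (1+η)^k. Set A(η) = 4 / ((1+η)^{1/4} + (1+η)^{−1/4})² and λ = σ^{−1} √(2 z A(η) / (1+η)^{k−1/2}). Then σ√(2z) ≥ A(η) z / (λ √t) + λ σ² √t / 2. -/
/-!
Write `p = 1 + η`, `c = p ^ (1/4)`, so that `A = α²` with `α = 2 / (c + c⁻¹)`, and put
`x = √t / √(p ^ (k - 1/2))`. With the given choice of `λ` the left-hand side equals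
`σ √(2z) · α (x + x⁻¹) / 2`. The hypothesis on `t` says exactly that `c⁻¹ ≤ x ≤ c`, and on that
interval `x + x⁻¹ ≤ c + c⁻¹`, so the left-hand side is at most `σ √(2z) · α (c + c⁻¹) / 2 = σ √(2z)`.
-/

open Real Set

lemma add_inv_le_add_inv_of_inv_le_of_le {c x : ℝ} (hc : 0 < c) (h₁ : c⁻¹ ≤ x) (h₂ : x ≤ c) :
    x + x⁻¹ ≤ c + c⁻¹ := by
  have hx : 0 < x := (inv_pos.2 hc).trans_le h₁
  have hcx : 1 ≤ c * x := by rwa [inv_le_iff_one_le_mul₀' hc] at h₁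
  have key : x + x⁻¹ - (c + c⁻¹) = (x - c) * (c * x - 1) / (c * x) := by
    field_simp; ring
  rw [← sub_nonpos, key]
  exact div_nonpos_of_nonpos_of_nonneg
    (mul_nonpos_of_nonpos_of_nonneg (by linarith) (by linarith)) (by positivity)

lemma sqrt_div_sqrt_rpow_mem_Icc {p e t : ℝ} (hp : 0 < p) (h₁ : p ^ (e - 1 / 2) ≤ t)
    (h₂ : t ≤ p ^ (e + 1 / 2)) :
    √t / √(p ^ e) ∈ Icc (p ^ (1 / 4 : ℝ))⁻¹ (p ^ (1 / 4 : ℝ)) := by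
  have hpe : 0 < p ^ e := rpow_pos_of_pos hp e
  have hsqrt : ∀ r : ℝ, √(p ^ r) = p ^ (r / 2) := fun r => by
    rw [sqrt_eq_rpow, ← rpow_mul hp.le]; ring_nf
  rw [← sqrt_div' _ hpe.le, ← rpow_neg hp.le]
  constructor
  · calc p ^ (-(1 / 4) : ℝ) = √(p ^ (e - 1 / 2) / p ^ e) := by
          rw [← rpow_sub hp, hsqrt]; ring_nf
      _ ≤ √(t / p ^ e) := by gcongr
  · calc √(t / p ^ e) ≤ √(p ^ (e + 1 / 2) / p ^ e) := by gcongr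
      _ = p ^ (1 / 4 : ℝ) := by rw [← rpow_sub hp, hsqrt]; ring_nf

lemma sq_mul_div_add_mul_div_eq {σ z α u B : ℝ} (hσ : 0 < σ) (hz : 0 < z) (hα : 0 < α)
    (hu : 0 < u) (hB : 0 < B) :
    let l := σ⁻¹ * √(2 * z * α ^ 2 / B)
    α ^ 2 * z / (l * u) + l * σ ^ 2 * u / 2 =
      σ * √(2 * z) * α * (u / √B + (u / √B)⁻¹) / 2 := by
  intro l
  have hl : l = σ⁻¹ * α * √(2 * z) / √B := by
    simp only [l, sqrt_div' _ hB.le, sqrt_mul' _ (sq_nonneg α), sqrt_sq hα.le]; ring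
  have hz' : z = √(2 * z) ^ 2 / 2 := by rw [sq_sqrt (by positivity)]; ring
  have hs : 0 < √(2 * z) := by positivity
  have : 0 < √B := sqrt_pos.2 hB
  rw [hl]
  generalize √(2 * z) = s at hz' hs ⊢
  subst hz'
  field_simp
  ring

theorem stmt_4_general (σ z η : ℝ) (hσ : 0 < σ) (hz : 0 < z) (hη : 0 < η)
    (k : ℕ) (t : ℤ)
    (h1 : (1 + η) ^ ((k : ℝ) - 1) ≤ (t : ℝ)) (h2 : (t : ℝ) ≤ (1 + η) ^ (k : ℝ)) :
    let A : ℝ := 4 / ((1 + η) ^ ((1 : ℝ) / 4) + (1 + η) ^ (-(1 : ℝ) / 4)) ^ 2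
    let l : ℝ := σ⁻¹ * Real.sqrt (2 * z * A / (1 + η) ^ ((k : ℝ) - 1 / 2))
    A * z / (l * Real.sqrt (t : ℝ)) + l * σ ^ 2 * Real.sqrt (t : ℝ) / 2 ≤
      σ * Real.sqrt (2 * z) := by
  intro A l
  have hp : 0 < 1 + η := by linarith
  set c := (1 + η) ^ ((1 : ℝ) / 4)
  have hc : 0 < c := rpow_pos_of_pos hp _
  set α := 2 / (c + c⁻¹)
  have hα : 0 < α := by positivity
  have hA : A = α ^ 2 := by
    have hc' : (1 + η) ^ (-(1 : ℝ) / 4) = c⁻¹ := by rw [neg_div, rpow_neg hp.le]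
    show 4 / (c + (1 + η) ^ (-(1 : ℝ) / 4)) ^ 2 = (2 / (c + c⁻¹)) ^ 2
    rw [hc', div_pow]
    norm_num
  obtain ⟨hx₁, hx₂⟩ := sqrt_div_sqrt_rpow_mem_Icc (e := k - 1 / 2) hp
    (by convert h1 using 2; ring) (by convert h2 using 2; ring)
  have ht : 0 < √(t : ℝ) := sqrt_pos.2 ((rpow_pos_of_pos hp _).trans_le h1)
  calc A * z / (l * √t) + l * σ ^ 2 * √t / 2
      = σ * √(2 * z) * α * (√t / √((1 + η) ^ ((k : ℝ) - 1 / 2))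
          + (√t / √((1 + η) ^ ((k : ℝ) - 1 / 2)))⁻¹) / 2 := by
        simp only [l, hA]
        exact sq_mul_div_add_mul_div_eq hσ hz hα ht (rpow_pos_of_pos hp _)
    _ ≤ σ * √(2 * z) * α * (c + c⁻¹) / 2 := by
        gcongr σ * √(2 * z) * α * ?_ / 2; exact add_inv_le_add_inv_of_inv_le_of_le hc hx₁ hx₂
    _ = σ * √(2 * z) := by simp only [α]; field_simp

theorem stmt_4 (σ z η : ℝ) (hσ : 0 < σ) (hz : 0 < z) (hη : 0 < η)
    (k : ℕ) (hk : 1 ≤ k) (t : ℤ)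
    (h1 : (1 + η) ^ ((k : ℝ) - 1) ≤ (t : ℝ)) (h2 : (t : ℝ) ≤ (1 + η) ^ (k : ℝ)) :
    let A : ℝ := 4 / ((1 + η) ^ ((1 : ℝ) / 4) + (1 + η) ^ (-(1 : ℝ) / 4)) ^ 2
    let l : ℝ := σ⁻¹ * Real.sqrt (2 * z * A / (1 + η) ^ ((k : ℝ) - 1 / 2))
    A * z / (l * Real.sqrt (t : ℝ)) + l * σ ^ 2 * Real.sqrt (t : ℝ) / 2 ≤
      σ * Real.sqrt (2 * z) :=
  stmt_4_general σ z η hσ hz hη k t h1 h2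
end

section
/- Let d(x,y) = x·log(x/y) + (1−x)·log((1−x)/(1−y)) be the binary Kullback–Leibler divergence. Then for every δ with 0 < δ ≤ 0.15, one has d(1−δ, δ) ≥ log(1/(2δ)). -/
/-!
Since `d(1 - δ, δ) = (1 - 2δ) log((1 - δ)/δ)`, the claim says that
`F(δ) = d(1 - δ, δ) + log(2δ) = log 2 + (1 - 2δ) log(1 - δ) + 2δ log δ` is nonnegative.
Comparing `δ log δ` with its tangent line at `c` and using `log(1 - δ) ≥ log(1 - c)` gives
`F(δ) ≥ F(c) + 2(c - δ)(log((1 - c)/c) - 1)` for `δ ≤ c`, so `F` is antitone as long as the odds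
`(1 - c)/c` are at least `e`. At `c = 3/20` this reduces the claim to `F(3/20) ≥ 0`, that is to
the integer inequality `17⁷ · 3³ ≥ 10¹⁰`.
-/

/-- The Kullback-Leibler divergence between Bernoulli distributions of
parameters `x` and `y`. -/
noncomputable def klBernoulli (x y : ℝ) : ℝ :=
  x * Real.log (x / y) + (1 - x) * Real.log ((1 - x) / (1 - y))

open Real Set

theorem klBernoulli_one_sub_self (x : ℝ) :
    klBernoulli (1 - x) x = (1 - 2 * x) * log ((1 - x) / x) := by
  have hlog : log (x / (1 - x)) = -log ((1 - x) / x) := by rw [← log_inv, inv_div]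
  rw [klBernoulli, sub_sub_cancel, hlog]
  ring

theorem mul_log_add_sub_le_mul_log {x c : ℝ} (hx : 0 < x) (hc : 0 < c) :
    x * log c + x - c ≤ x * log x := by
  have h := one_sub_inv_le_log_of_pos (div_pos hx hc)
  rw [inv_div, log_div hx.ne' hc.ne'] at h
  have hmul := mul_le_mul_of_nonneg_left h hx.le
  rw [mul_sub, mul_one, mul_div_cancel₀ _ hx.ne'] at hmul
  linarith

theorem klBernoulli_one_sub_self_add_log_eq {x : ℝ} (hx : 0 < x) (hx1 : x < 1) :
    klBernoulli (1 - x) x + log (2 * x) = log 2 + (1 - 2 * x) * log (1 - x) + 2 * x * log x := by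
  rw [klBernoulli_one_sub_self, log_div (by linarith) hx.ne', log_mul two_ne_zero hx.ne']
  ring

theorem antitoneOn_klBernoulli_one_sub_self_add_log :
    AntitoneOn (fun x => klBernoulli (1 - x) x + log (2 * x)) (Ioc 0 (1 / (1 + exp 1))) := by
  rintro x ⟨hx, -⟩ c ⟨hc, hce⟩ hxc
  have he : 1 < exp 1 := one_lt_exp_iff.mpr one_pos
  have hc1 : c * (1 + exp 1) ≤ 1 := by rwa [le_div_iff₀ (by positivity)] at hce
  have hc_half : 2 * c < 1 := by nlinarith
  have hodds : 1 ≤ log (1 - c) - log c := by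
    rw [← log_div (by linarith) hc.ne', le_log_iff_exp_le (by apply div_pos <;> linarith),
      le_div_iff₀ hc]
    linarith
  have htangent := mul_log_add_sub_le_mul_log hx hc
  have hlog_one_sub : log (1 - c) ≤ log (1 - x) := log_le_log (by linarith) (by linarith)
  have hweighted : (1 - 2 * x) * log (1 - c) ≤ (1 - 2 * x) * log (1 - x) :=
    mul_le_mul_of_nonneg_left hlog_one_sub (by linarith)
  dsimp only
  rw [klBernoulli_one_sub_self_add_log_eq hx (by linarith),
    klBernoulli_one_sub_self_add_log_eq hc (by linarith)]
  linarith [mul_le_mul_of_nonneg_left hodds (sub_nonneg.mpr hxc)]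

theorem klBernoulli_one_sub_self_add_log_nonneg_three_twentieths :
    0 ≤ klBernoulli (1 - 3 / 20) (3 / 20) + log (2 * (3 / 20)) := by
  have hpow : 0 ≤ log ((17 / 3 : ℝ) ^ 7 * (3 / 10) ^ 10) := log_nonneg (by norm_num)
  rw [log_mul (by norm_num) (by norm_num), log_pow, log_pow] at hpow
  rw [klBernoulli_one_sub_self]
  norm_num at hpow ⊢
  linarith

theorem stmt_9 (δ : ℝ) (h0 : 0 < δ) (h1 : δ ≤ 0.15) :
    Real.log (1 / (2 * δ)) ≤ klBernoulli (1 - δ) δ := by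
  have hc : (3 / 20 : ℝ) ∈ Ioc 0 (1 / (1 + exp 1)) := by
    refine ⟨by norm_num, ?_⟩
    rw [le_div_iff₀ (by positivity)]
    linarith [exp_one_lt_d9]
  have hδc : δ ≤ 3 / 20 := by norm_num at h1 ⊢; linarith
  have hanti := antitoneOn_klBernoulli_one_sub_self_add_log ⟨h0, hδc.trans hc.2⟩ hc hδc
  dsimp only at hanti
  rw [one_div, log_inv]
  linarith [klBernoulli_one_sub_self_add_log_nonneg_three_twentieths]
end

section
/- Let μ₁ > μ₂ be real numbers and σ₁, σ₂ > 0. Then the infimum, over all pairs (a, b) ∈ ℝ² with a < b, of max( (a−μ₁)²/(2σ₁²), (b−μ₂)²/(2σ₂²) ) equals (μ₁−μ₂)² / (2(σ₁+σ₂)²). -/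
/-!
Put `d = μ₁ - μ₂` and `w = max ((a - μ₁)² / (2σ₁²)) ((b - μ₂)² / (2σ₂²))`. Then
`|a - μ₁| ≤ σ₁ √(2w)` and `|b - μ₂| ≤ σ₂ √(2w)`, so `a ≤ b` forces `d ≤ (σ₁ + σ₂) √(2w)`, i.e.
`w ≥ d² / (2(σ₁ + σ₂)²)`. Equality holds at `a = b = (σ₂ μ₁ + σ₁ μ₂) / (σ₁ + σ₂)`, the point
dividing `[μ₂, μ₁]` in the ratio `σ₂ : σ₁`; it is not admissible (`a < b` is required), but it is
a limit of admissible points `(a, a + δ)` along which the objective is continuous.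
-/

open Filter Topology Set

lemma abs_le_mul_sqrt_of_sq_div_le {x σ r : ℝ} (hσ : 0 < σ) (h : x ^ 2 / (2 * σ ^ 2) ≤ r) :
    |x| ≤ σ * √(2 * r) := by
  have hx : x ^ 2 ≤ σ ^ 2 * (2 * r) := by
    rw [div_le_iff₀ (by positivity)] at h
    linarith
  calc |x| = √(x ^ 2) := (Real.sqrt_sq_eq_abs x).symm
    _ ≤ √(σ ^ 2 * (2 * r)) := Real.sqrt_le_sqrt hx
    _ = σ * √(2 * r) := by rw [Real.sqrt_mul (sq_nonneg σ), Real.sqrt_sq hσ.le]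

lemma sq_sub_div_le_max_of_le {μ₁ μ₂ σ₁ σ₂ a b : ℝ} (hμ : μ₂ ≤ μ₁) (hσ₁ : 0 < σ₁)
    (hσ₂ : 0 < σ₂) (hab : a ≤ b) :
    (μ₁ - μ₂) ^ 2 / (2 * (σ₁ + σ₂) ^ 2) ≤
      max ((a - μ₁) ^ 2 / (2 * σ₁ ^ 2)) ((b - μ₂) ^ 2 / (2 * σ₂ ^ 2)) := by
  set w := max ((a - μ₁) ^ 2 / (2 * σ₁ ^ 2)) ((b - μ₂) ^ 2 / (2 * σ₂ ^ 2))
  have hw : 0 ≤ w := le_max_of_le_left (by positivity)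
  have ha := abs_le_mul_sqrt_of_sq_div_le hσ₁ (le_max_left _ _ : _ ≤ w)
  have hb := abs_le_mul_sqrt_of_sq_div_le hσ₂ (le_max_right _ _ : _ ≤ w)
  have hd : μ₁ - μ₂ ≤ (σ₁ + σ₂) * √(2 * w) := by
    linarith [neg_abs_le (a - μ₁), le_abs_self (b - μ₂)]
  have hd2 : (μ₁ - μ₂) ^ 2 ≤ (σ₁ + σ₂) ^ 2 * (2 * w) := by
    calc (μ₁ - μ₂) ^ 2 ≤ ((σ₁ + σ₂) * √(2 * w)) ^ 2 := pow_le_pow_left₀ (by linarith) hd 2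
      _ = (σ₁ + σ₂) ^ 2 * (2 * w) := by rw [mul_pow, Real.sq_sqrt (by linarith)]
  rw [div_le_iff₀ (by positivity)]
  linarith

lemma max_sq_sub_div_weightedMean (μ₁ μ₂ : ℝ) {σ₁ σ₂ : ℝ} (hσ₁ : 0 < σ₁) (hσ₂ : 0 < σ₂) :
    let x := (σ₂ * μ₁ + σ₁ * μ₂) / (σ₁ + σ₂)
    max ((x - μ₁) ^ 2 / (2 * σ₁ ^ 2)) ((x - μ₂) ^ 2 / (2 * σ₂ ^ 2)) =
      (μ₁ - μ₂) ^ 2 / (2 * (σ₁ + σ₂) ^ 2) := by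
  intro x
  have hs : σ₁ + σ₂ ≠ 0 := by positivity
  have h₁ : (x - μ₁) ^ 2 / (2 * σ₁ ^ 2) = (μ₁ - μ₂) ^ 2 / (2 * (σ₁ + σ₂) ^ 2) := by
    simp only [x]; field_simp; ring
  have h₂ : (x - μ₂) ^ 2 / (2 * σ₂ ^ 2) = (μ₁ - μ₂) ^ 2 / (2 * (σ₁ + σ₂) ^ 2) := by
    simp only [x]; field_simp; ring
  rw [h₁, h₂, max_self]

lemma sInf_setOf_lt_le_diag {f : ℝ → ℝ → ℝ} {x : ℝ} (hf : ContinuousAt (f x) x)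
    (hbdd : BddBelow {v | ∃ a b, a < b ∧ v = f a b}) :
    sInf {v | ∃ a b, a < b ∧ v = f a b} ≤ f x x := by
  refine ge_of_tendsto (hf.tendsto.mono_left nhdsWithin_le_nhds : Tendsto (f x) (𝓝[>] x) _) ?_
  filter_upwards [self_mem_nhdsWithin] with b hb
  exact csInf_le hbdd ⟨x, b, hb, rfl⟩

theorem stmt_10 (μ₁ μ₂ σ₁ σ₂ : ℝ) (hμ : μ₂ < μ₁) (hσ₁ : 0 < σ₁) (hσ₂ : 0 < σ₂) :
    sInf {v : ℝ | ∃ a b : ℝ, a < b ∧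
        v = max ((a - μ₁) ^ 2 / (2 * σ₁ ^ 2)) ((b - μ₂) ^ 2 / (2 * σ₂ ^ 2))} =
      (μ₁ - μ₂) ^ 2 / (2 * (σ₁ + σ₂) ^ 2) := by
  have hlower : ∀ v ∈ {v : ℝ | ∃ a b : ℝ, a < b ∧
      v = max ((a - μ₁) ^ 2 / (2 * σ₁ ^ 2)) ((b - μ₂) ^ 2 / (2 * σ₂ ^ 2))},
      (μ₁ - μ₂) ^ 2 / (2 * (σ₁ + σ₂) ^ 2) ≤ v := by
    rintro v ⟨a, b, hab, rfl⟩
    exact sq_sub_div_le_max_of_le hμ.le hσ₁ hσ₂ hab.le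
  refine le_antisymm ?_ (le_csInf ⟨_, 0, 1, zero_lt_one, rfl⟩ hlower)
  rw [← max_sq_sub_div_weightedMean μ₁ μ₂ hσ₁ hσ₂]
  exact sInf_setOf_lt_le_diag (by fun_prop) ⟨_, hlower⟩
end

section
/- Let 0 < μ₂ < μ₁ < 1, let θ_a = log(μ_a/(1−μ_a)) for a = 1, 2, and let m(θ) = 1/(1+exp(−θ)). Let n₁, n₂ ≥ 1 be integers, set α = n₁/(n₁+n₂) and m_α = m(α θ₁ + (1−α) θ₂). Let X₁,…,X_{n₁}, Y₁,…,Y_{n₂} be jointly independent random variables such that each Xᵢ is Bernoulli with parameter μ₁ and each Yⱼ is Bernoulli with parameter μ₂. Then P( (1/n₁) Σ_{i=1}^{n₁} Xᵢ < (1/n₂) Σ_{j=1}^{n₂} Yⱼ ) ≤ exp( − (n₁+n₂) · ( α·d(m_α, μ₁) + (1−α)·d(m_α, μ₂) ) ). -/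
/-!
Write `μₐ = σ θₐ` with `σ = sigmoid`. Bernoulli laws form an exponential family with log-partition
function `A = softplus`, `A θ = log (1 + exp θ)`: for `X ~ Bernoulli (σ θ)` one has
`E[exp (u X)] = exp (A (θ + u) - A θ)`, and `d(σ θ, σ θ')` is the Bregman divergence of `A`.
With `θ_α = α θ₁ + (1 - α) θ₂`, the variable `Σ (θ_α - θ₁) Xᵢ + Σ (θ_α - θ₂) Yⱼ` is a positive
multiple of `n₁ ΣYⱼ - n₂ ΣXᵢ`, hence nonnegative on the event, and Chernoff's bound at `1` gives
`exp (n₁ (A θ_α - A θ₁) + n₂ (A θ_α - A θ₂))`. Since `θ_α` is the `α`-mixture of `θ₁` and `θ₂`,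
the linear terms of the two Bregman divergences cancel and this exponent is the stated one.
-/

open MeasureTheory ProbabilityTheory

/-- The Bernoulli distribution of parameter `p`, as a measure on `ℝ`:
it puts mass `p` at `1` and mass `1 - p` at `0`. -/
noncomputable def bernoulliReal (p : ℝ) : Measure ℝ :=
  ENNReal.ofReal p • Measure.dirac 1 + ENNReal.ofReal (1 - p) • Measure.dirac 0

open Real Finset

namespace Real

noncomputable def softplus (θ : ℝ) : ℝ := log (1 + exp θ)

lemma one_sub_sigmoid (θ : ℝ) : 1 - sigmoid θ = (1 + exp θ)⁻¹ := by
  rw [← sigmoid_neg, sigmoid_def, neg_neg]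

lemma sigmoid_eq_exp_div (θ : ℝ) : sigmoid θ = exp θ / (1 + exp θ) := by
  rw [sigmoid_def, exp_neg]
  field_simp
  ring

lemma log_sigmoid (θ : ℝ) : log (sigmoid θ) = θ - softplus θ := by
  rw [sigmoid_eq_exp_div, log_div (exp_ne_zero θ) (by positivity), log_exp, softplus]

lemma log_one_sub_sigmoid (θ : ℝ) : log (1 - sigmoid θ) = -softplus θ := by
  rw [one_sub_sigmoid, log_inv, softplus]

lemma log_sigmoid_div_one_sub_sigmoid (θ : ℝ) : log (sigmoid θ / (1 - sigmoid θ)) = θ := by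
  rw [log_div (sigmoid_pos θ).ne' (sub_pos.mpr (sigmoid_lt_one θ)).ne', log_sigmoid,
    log_one_sub_sigmoid]
  ring

lemma sigmoid_mul_exp_add_one_sub_sigmoid (θ t : ℝ) :
    sigmoid θ * exp t + (1 - sigmoid θ) = exp (softplus (θ + t) - softplus θ) := by
  rw [exp_sub, softplus, softplus, exp_log (by positivity), exp_log (by positivity),
    sigmoid_eq_exp_div, exp_add]
  field_simp
  ring

end Real

lemma klBernoulli_sigmoid (θ θ' : ℝ) :
    klBernoulli (sigmoid θ) (sigmoid θ') = sigmoid θ * (θ - θ') + softplus θ' - softplus θ := by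
  have h₀ (x : ℝ) : sigmoid x ≠ 0 := (sigmoid_pos x).ne'
  have h₁ (x : ℝ) : 1 - sigmoid x ≠ 0 := (sub_pos.mpr (sigmoid_lt_one x)).ne'
  rw [klBernoulli, log_div (h₀ θ) (h₀ θ'), log_div (h₁ θ) (h₁ θ'), log_sigmoid, log_sigmoid,
    log_one_sub_sigmoid, log_one_sub_sigmoid]
  ring

lemma mul_klBernoulli_sigmoid_add_mul (α θ₁ θ₂ : ℝ) :
    α * klBernoulli (sigmoid (α * θ₁ + (1 - α) * θ₂)) (sigmoid θ₁) +
        (1 - α) * klBernoulli (sigmoid (α * θ₁ + (1 - α) * θ₂)) (sigmoid θ₂) =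
      α * softplus θ₁ + (1 - α) * softplus θ₂ - softplus (α * θ₁ + (1 - α) * θ₂) := by
  rw [klBernoulli_sigmoid, klBernoulli_sigmoid]
  ring

lemma integrable_bernoulliReal (p : ℝ) (f : ℝ → ℝ) : Integrable f (bernoulliReal p) :=
  integrable_add_measure.mpr
    ⟨(integrable_dirac enorm_lt_top).smul_measure ENNReal.ofReal_ne_top,
      (integrable_dirac enorm_lt_top).smul_measure ENNReal.ofReal_ne_top⟩

lemma integral_bernoulliReal {p : ℝ} (hp₀ : 0 ≤ p) (hp₁ : p ≤ 1) (f : ℝ → ℝ) :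
    ∫ x, f x ∂bernoulliReal p = p * f 1 + (1 - p) * f 0 := by
  rw [bernoulliReal, integral_add_measure
      ((integrable_dirac enorm_lt_top).smul_measure ENNReal.ofReal_ne_top)
      ((integrable_dirac enorm_lt_top).smul_measure ENNReal.ofReal_ne_top),
    integral_smul_measure, integral_smul_measure, integral_dirac, integral_dirac,
    ENNReal.toReal_ofReal hp₀, ENNReal.toReal_ofReal (sub_nonneg.mpr hp₁), smul_eq_mul,
    smul_eq_mul]

@[to_additive]
lemma Finset.prod_range_add_ite_lt {M : Type*} [CommMonoid M] (f g : ℕ → M) (m n : ℕ) :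
    ∏ i ∈ range (m + n), (if i < m then f i else g i) =
      (∏ i ∈ range m, f i) * ∏ i ∈ Ico m (m + n), g i := by
  rw [← prod_range_mul_prod_Ico _ (Nat.le_add_right m n)]
  congr 1
  · exact prod_congr rfl fun i hi ↦ if_pos (mem_range.mp hi)
  · exact prod_congr rfl fun i hi ↦ if_neg (not_lt.mpr (mem_Ico.mp hi).1)

section Bernoulli

variable {Ω : Type*} [MeasurableSpace Ω] {P : Measure Ω} {X : Ω → ℝ} {p : ℝ}

lemma integrable_exp_mul_of_map_eq_bernoulliReal (hX : Measurable X)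
    (hlaw : P.map X = bernoulliReal p) (t : ℝ) : Integrable (fun ω ↦ exp (t * X ω)) P :=
  (integrable_map_measure (g := fun x ↦ exp (t * x)) (by fun_prop) hX.aemeasurable).mp
    (hlaw ▸ integrable_bernoulliReal p _)

lemma mgf_of_map_eq_bernoulliReal (hX : Measurable X) (hlaw : P.map X = bernoulliReal p)
    (hp₀ : 0 ≤ p) (hp₁ : p ≤ 1) (t : ℝ) : mgf X P t = p * exp t + (1 - p) := by
  rw [← mgf_id_map hX.aemeasurable, hlaw, mgf, integral_bernoulliReal hp₀ hp₁]
  simp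

lemma prod_mgf_of_map_eq_bernoulliReal {Z : ℕ → Ω → ℝ} (hmeas : ∀ i, Measurable (Z i))
    {s : Finset ℕ} (hlaw : ∀ i ∈ s, P.map (Z i) = bernoulliReal p) (hp₀ : 0 ≤ p) (hp₁ : p ≤ 1)
    (t : ℝ) : ∏ i ∈ s, mgf (Z i) P t = (p * exp t + (1 - p)) ^ #s :=
  prod_eq_pow_card fun i hi ↦ mgf_of_map_eq_bernoulliReal (hmeas i) (hlaw i hi) hp₀ hp₁ t

end Bernoulli

namespace ProbabilityTheory.iIndepFun

variable {Ω : Type*} [MeasurableSpace Ω] {P : Measure Ω}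

lemma measureReal_sum_mul_nonneg_le_prod_mgf {ι : Type*} {Z : ι → Ω → ℝ}
    (hindep : iIndepFun Z P) (hmeas : ∀ i, Measurable (Z i)) (c : ι → ℝ) {s : Finset ι}
    (hint : ∀ i ∈ s, Integrable (fun ω ↦ exp (c i * Z i ω)) P) :
    P.real {ω | 0 ≤ ∑ i ∈ s, c i * Z i ω} ≤ ∏ i ∈ s, mgf (Z i) P (c i) := by
  have := hindep.isProbabilityMeasure
  have hindep' : iIndepFun (fun i ω ↦ c i * Z i ω) P :=
    hindep.comp (fun i x ↦ c i * x) fun i ↦ measurable_const_mul (c i)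
  have hmeas' (i : ι) : Measurable fun ω ↦ c i * Z i ω := (hmeas i).const_mul (c i)
  have hint' : Integrable (fun ω ↦ exp (1 * (∑ i ∈ s, fun ω ↦ c i * Z i ω) ω)) P :=
    hindep'.integrable_exp_mul_sum hmeas' fun i hi ↦ by simpa using hint i hi
  have hchernoff := measure_ge_le_exp_mul_mgf 0 zero_le_one hint'
  simpa only [mul_zero, exp_zero, one_mul, hindep'.mgf_sum hmeas', mgf_const_mul, mul_one,
    Finset.sum_apply] using hchernoff

variable {Z : ℕ → Ω → ℝ} {n₁ n₂ : ℕ}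

lemma measureReal_mean_lt_mean_le (hindep : iIndepFun Z P) (hmeas : ∀ i, Measurable (Z i))
    (hn₁ : 0 < n₁) (hn₂ : 0 < n₂) {t : ℝ} (ht : 0 ≤ t)
    (hint : ∀ i < n₁ + n₂, ∀ u, Integrable (fun ω ↦ exp (u * Z i ω)) P) :
    P.real {ω | (∑ i ∈ range n₁, Z i ω) / n₁ < (∑ i ∈ Ico n₁ (n₁ + n₂), Z i ω) / n₂} ≤
      (∏ i ∈ range n₁, mgf (Z i) P (-(t * n₂))) *
        ∏ i ∈ Ico n₁ (n₁ + n₂), mgf (Z i) P (t * n₁) := by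
  have := hindep.isProbabilityMeasure
  set c : ℕ → ℝ := fun i ↦ if i < n₁ then -(t * n₂) else t * n₁
  have hsub : {ω | (∑ i ∈ range n₁, Z i ω) / n₁ < (∑ i ∈ Ico n₁ (n₁ + n₂), Z i ω) / n₂} ⊆
      {ω | 0 ≤ ∑ i ∈ range (n₁ + n₂), c i * Z i ω} := by
    intro ω hω
    rw [Set.mem_ofPred_eq, div_lt_div_iff₀ (Nat.cast_pos.mpr hn₁) (Nat.cast_pos.mpr hn₂)] at hω
    simp only [Set.mem_ofPred_eq, c, ite_mul, sum_range_add_ite_lt, ← mul_sum]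
    nlinarith
  calc _ ≤ P.real {ω | 0 ≤ ∑ i ∈ range (n₁ + n₂), c i * Z i ω} := measureReal_mono hsub
    _ ≤ ∏ i ∈ range (n₁ + n₂), mgf (Z i) P (c i) :=
      hindep.measureReal_sum_mul_nonneg_le_prod_mgf hmeas c fun i hi ↦ hint i (mem_range.mp hi) _
    _ = _ := by simp only [c, apply_ite, prod_range_add_ite_lt]

lemma measureReal_mean_lt_mean_le_exp_softplus (hindep : iIndepFun Z P)
    (hmeas : ∀ i, Measurable (Z i)) (hn₁ : 0 < n₁) (hn₂ : 0 < n₂) {θ₁ θ₂ θ : ℝ}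
    (h₁₂ : θ₂ ≤ θ₁) (hθ : (n₁ + n₂) * θ = n₁ * θ₁ + n₂ * θ₂)
    (hX : ∀ i < n₁, P.map (Z i) = bernoulliReal (sigmoid θ₁))
    (hY : ∀ i, n₁ ≤ i → i < n₁ + n₂ → P.map (Z i) = bernoulliReal (sigmoid θ₂)) :
    P.real {ω | (∑ i ∈ range n₁, Z i ω) / n₁ < (∑ i ∈ Ico n₁ (n₁ + n₂), Z i ω) / n₂} ≤
      exp (n₁ * (softplus θ - softplus θ₁) + n₂ * (softplus θ - softplus θ₂)) := by
  have hN : (0 : ℝ) < n₁ + n₂ := by positivity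
  set t := (θ₁ - θ₂) / (n₁ + n₂)
  have htN : t * (n₁ + n₂) = θ₁ - θ₂ := div_mul_cancel₀ _ hN.ne'
  have ht₁ : -(t * n₂) = θ - θ₁ :=
    mul_left_cancel₀ hN.ne' (by linear_combination (-n₂ : ℝ) * htN - hθ)
  have ht₂ : t * n₁ = θ - θ₂ := mul_left_cancel₀ hN.ne' (by linear_combination n₁ * htN - hθ)
  have hint : ∀ i < n₁ + n₂, ∀ u, Integrable (fun ω ↦ exp (u * Z i ω)) P := by
    intro i hi u
    rcases lt_or_ge i n₁ with h | h
    exacts [integrable_exp_mul_of_map_eq_bernoulliReal (hmeas i) (hX i h) u,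
      integrable_exp_mul_of_map_eq_bernoulliReal (hmeas i) (hY i h hi) u]
  calc _ ≤ _ :=
        hindep.measureReal_mean_lt_mean_le hmeas hn₁ hn₂ (div_nonneg (sub_nonneg.mpr h₁₂) hN.le) hint
    _ = exp (softplus θ - softplus θ₁) ^ n₁ * exp (softplus θ - softplus θ₂) ^ n₂ := by
      rw [ht₁, ht₂,
        prod_mgf_of_map_eq_bernoulliReal hmeas (fun i hi ↦ hX i (mem_range.mp hi))
          (sigmoid_nonneg _) (sigmoid_le_one _),
        prod_mgf_of_map_eq_bernoulliReal hmeas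
          (fun i hi ↦ hY i (mem_Ico.mp hi).1 (mem_Ico.mp hi).2) (sigmoid_nonneg _)
          (sigmoid_le_one _),
        sigmoid_mul_exp_add_one_sub_sigmoid, sigmoid_mul_exp_add_one_sub_sigmoid, add_sub_cancel,
        add_sub_cancel, card_range, Nat.card_Ico, Nat.add_sub_cancel_left]
    _ = _ := by rw [← exp_nat_mul, ← exp_nat_mul, ← exp_add]

end ProbabilityTheory.iIndepFun

theorem stmt_14 {Ω : Type*} [MeasurableSpace Ω] (P : Measure Ω) [IsProbabilityMeasure P]
    (μ₁ μ₂ : ℝ) (h₂ : 0 < μ₂) (h₁₂ : μ₂ < μ₁) (h₁ : μ₁ < 1)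
    (n₁ n₂ : ℕ) (hn₁ : 1 ≤ n₁) (hn₂ : 1 ≤ n₂)
    (Z : ℕ → Ω → ℝ) (hmeas : ∀ i, Measurable (Z i))
    (hindep : iIndepFun Z P)
    (hX : ∀ i < n₁, Measure.map (Z i) P = bernoulliReal μ₁)
    (hY : ∀ i, n₁ ≤ i → i < n₁ + n₂ → Measure.map (Z i) P = bernoulliReal μ₂) :
    let θ₁ : ℝ := Real.log (μ₁ / (1 - μ₁))
    let θ₂ : ℝ := Real.log (μ₂ / (1 - μ₂))
    let α : ℝ := n₁ / (n₁ + n₂)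
    let mα : ℝ := 1 / (1 + Real.exp (-(α * θ₁ + (1 - α) * θ₂)))
    P {ω | (∑ i ∈ Finset.range n₁, Z i ω) / n₁ <
        (∑ i ∈ Finset.Ico n₁ (n₁ + n₂), Z i ω) / n₂} ≤
      ENNReal.ofReal (Real.exp (-(n₁ + n₂ : ℝ) *
        (α * klBernoulli mα μ₁ + (1 - α) * klBernoulli mα μ₂))) := by
  intro θ₁ θ₂ α mα
  obtain ⟨η₁, rfl⟩ : μ₁ ∈ Set.range sigmoid := by
    rw [range_sigmoid]; exact ⟨h₂.trans h₁₂, h₁⟩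
  obtain ⟨η₂, rfl⟩ : μ₂ ∈ Set.range sigmoid := by
    rw [range_sigmoid]; exact ⟨h₂, h₁₂.trans h₁⟩
  have hθ₁ : θ₁ = η₁ := log_sigmoid_div_one_sub_sigmoid η₁
  have hθ₂ : θ₂ = η₂ := log_sigmoid_div_one_sub_sigmoid η₂
  have hmα : mα = sigmoid (α * θ₁ + (1 - α) * θ₂) := one_div _
  have hαN : α * (n₁ + n₂) = n₁ := by simp only [α]; field_simp
  clear_value θ₁ θ₂ α mα
  subst hθ₁ hθ₂ hmα
  rw [← ofReal_measureReal, mul_klBernoulli_sigmoid_add_mul]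
  refine ENNReal.ofReal_le_ofReal ((hindep.measureReal_mean_lt_mean_le_exp_softplus hmeas hn₁ hn₂
    (θ := α * θ₁ + (1 - α) * θ₂) (sigmoid_le_iff.mp h₁₂.le) ?_ hX hY).trans_eq ?_)
  · linear_combination (θ₁ - θ₂) * hαN
  · congr 1
    linear_combination (softplus θ₁ - softplus θ₂) * hαN
end

section
/- Let σ₁, σ₂ > 0 and set α = σ₁/(σ₁+σ₂). For every integer t with t > σ₁/σ₂ + 1, one has σ₁²/⌈αt⌉ + σ₂²/(t − ⌈αt⌉) ≤ ( (σ₁+σ₂)²/t ) · ( (t − σ₁/σ₂) / (t − σ₁/σ₂ − 1) ). -/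
/-! With `c = ⌈α t⌉` and `s = σ₁ + σ₂`, the first arm has at least `(σ₁ / s) t` samples and the
second strictly more than `(1 - α) t - 1 = (σ₂ / s) (t - σ₁ / σ₂ - 1)`. Each term `σᵢ² / Nᵢ` is then
at most `σᵢ s / uᵢ` for the corresponding lower bound `(σᵢ / s) uᵢ`, and the two bounds add up
exactly to the right-hand side. -/

lemma sub_ceil_mul_gt (α x : ℝ) : (1 - α) * x - 1 < x - ⌈α * x⌉ := by
  linarith [Int.ceil_lt_add_one (α * x)]

lemma sq_div_le_mul_div_of_div_mul_le {a s u y : ℝ} (ha : 0 < a) (hs : 0 < s) (hu : 0 < u)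
    (hy : a / s * u ≤ y) : a ^ 2 / y ≤ a * s / u :=
  calc a ^ 2 / y ≤ a ^ 2 / (a / s * u) := by gcongr
    _ = a * s / u := by field_simp

lemma one_sub_div_add_mul_sub_one {σ₁ σ₂ : ℝ} (hσ₂ : σ₂ ≠ 0) (hs : σ₁ + σ₂ ≠ 0) (t : ℝ) :
    (1 - σ₁ / (σ₁ + σ₂)) * t - 1 = σ₂ / (σ₁ + σ₂) * (t - σ₁ / σ₂ - 1) := by
  field_simp
  ring

lemma mul_div_add_mul_div_sub_div_sub_one {σ₁ σ₂ t : ℝ} (hσ₂ : σ₂ ≠ 0) (ht : t ≠ 0)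
    (htr : t - σ₁ / σ₂ - 1 ≠ 0) :
    σ₁ * (σ₁ + σ₂) / t + σ₂ * (σ₁ + σ₂) / (t - σ₁ / σ₂ - 1) =
      (σ₁ + σ₂) ^ 2 / t * ((t - σ₁ / σ₂) / (t - σ₁ / σ₂ - 1)) := by
  -- with `r = σ₁ / σ₂` as an atom, `field_simp` sees the denominator `t - r - 1` as it is
  have hσ₁ : σ₁ = σ₁ / σ₂ * σ₂ := (div_mul_cancel₀ _ hσ₂).symm
  generalize σ₁ / σ₂ = r at *
  subst hσ₁
  field_simp
  ring

theorem stmt_19 (σ₁ σ₂ : ℝ) (hσ₁ : 0 < σ₁) (hσ₂ : 0 < σ₂) (t : ℕ)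
    (ht : σ₁ / σ₂ + 1 < (t : ℝ)) :
    σ₁ ^ 2 / (⌈σ₁ / (σ₁ + σ₂) * (t : ℝ)⌉ : ℝ) +
      σ₂ ^ 2 / ((t : ℝ) - (⌈σ₁ / (σ₁ + σ₂) * (t : ℝ)⌉ : ℝ)) ≤
      (σ₁ + σ₂) ^ 2 / (t : ℝ) * (((t : ℝ) - σ₁ / σ₂) / ((t : ℝ) - σ₁ / σ₂ - 1)) := by
  have hs : 0 < σ₁ + σ₂ := by positivity
  have ht₀ : (0 : ℝ) < t := by linarith [div_pos hσ₁ hσ₂]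
  have htr : 0 < (t : ℝ) - σ₁ / σ₂ - 1 := by linarith
  have h₁ := sq_div_le_mul_div_of_div_mul_le hσ₁ hs ht₀ (Int.le_ceil (σ₁ / (σ₁ + σ₂) * t))
  have h₂ : σ₂ ^ 2 / ((t : ℝ) - ⌈σ₁ / (σ₁ + σ₂) * (t : ℝ)⌉) ≤
      σ₂ * (σ₁ + σ₂) / (t - σ₁ / σ₂ - 1) :=
    sq_div_le_mul_div_of_div_mul_le hσ₂ hs htr <| by
      rw [← one_sub_div_add_mul_sub_one hσ₂.ne' hs.ne']
      exact (sub_ceil_mul_gt _ _).le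
  calc _ ≤ σ₁ * (σ₁ + σ₂) / t + σ₂ * (σ₁ + σ₂) / (t - σ₁ / σ₂ - 1) := add_le_add h₁ h₂
    _ = _ := mul_div_add_mul_div_sub_div_sub_one hσ₂.ne' ht₀.ne' htr.ne'
end
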